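/- Fix h > 0 and lp with 0 < lp ≤ h/2, and let S : ℝ → ℝ be the GIMPM function: S(ξ) = (h+lp+ξ)²/(4·h·lp) for −h−lp < ξ ≤ −h+lp; S(ξ) = 1 + ξ/h for −h+lp < ξ ≤ −lp; S(ξ) = 1 − ξ²/(2·h·lp) − lp²/(2·h·lp) for −lp < ξ ≤ lp; S(ξ) = 1 − ξ/h for lp < ξ ≤ h−lp; S(ξ) = (h+lp−ξ)²/(4·h·lp) for h−lp < ξ ≤ h+lp; and S(ξ) = 0 otherwise. Then S is continuously differentiable on ℝ (i.e., S is of class C¹). -/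

import Mathlib

/-- The GIMPM shape function on a grid of spacing `h` with particle half-length `lp`. -/
noncomputable def gimpS (h lp ξ : ℝ) : ℝ :=
  if -h - lp < ξ ∧ ξ ≤ -h + lp then (h + lp + ξ) ^ 2 / (4 * h * lp)
  else if -h + lp < ξ ∧ ξ ≤ -lp then 1 + ξ / h
  else if -lp < ξ ∧ ξ ≤ lp then 1 - ξ ^ 2 / (2 * h * lp) - lp ^ 2 / (2 * h * lp)
  else if lp < ξ ∧ ξ ≤ h - lp then 1 - ξ / h
  else if h - lp < ξ ∧ ξ ≤ h + lp then (h + lp - ξ) ^ 2 / (4 * h * lp)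
  else 0

open Set

/-- Antiderivative of the hat function of spacing `h`. -/
noncomputable def hatF (h x : ℝ) : ℝ :=
  if x ≤ -h then -h / 2
  else if x ≤ 0 then x + x ^ 2 / (2 * h)
  else if x ≤ h then x - x ^ 2 / (2 * h)
  else h / 2

/-- The hat function. -/
noncomputable def hatN (h x : ℝ) : ℝ := max 0 (1 - |x| / h)

lemma hatN_continuous (h : ℝ) : Continuous (hatN h) :=
  continuous_const.max (continuous_const.sub (continuous_abs.div_const h))

private lemma glue {f : ℝ → ℝ} {d x : ℝ} (hl : HasDerivWithinAt f d (Iic x) x)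
    (hr : HasDerivWithinAt f d (Ici x) x) : HasDerivAt f d x := by
  have := hl.union hr
  rw [Set.Iic_union_Ici] at this
  exact hasDerivWithinAt_univ.mp this

private lemma left_piece {f g : ℝ → ℝ} {d x a : ℝ} (ha : a < x) (hg : HasDerivAt g d x)
    (heq : ∀ y, a < y → y ≤ x → f y = g y) : HasDerivWithinAt f d (Iic x) x := by
  refine hg.hasDerivWithinAt.congr_of_eventuallyEq ?_ (heq x ha le_rfl)
  filter_upwards [mem_nhdsWithin_of_mem_nhds (Ioi_mem_nhds ha), self_mem_nhdsWithin]
    with y h1 h2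
  exact heq y h1 h2

private lemma right_piece {f g : ℝ → ℝ} {d x b : ℝ} (hb : x < b) (hg : HasDerivAt g d x)
    (heq : ∀ y, x ≤ y → y < b → f y = g y) : HasDerivWithinAt f d (Ici x) x := by
  refine hg.hasDerivWithinAt.congr_of_eventuallyEq ?_ (heq x le_rfl hb)
  filter_upwards [mem_nhdsWithin_of_mem_nhds (Iio_mem_nhds hb), self_mem_nhdsWithin]
    with y h1 h2
  exact heq y h2 h1

lemma hasDerivAt_hatF {h : ℝ} (hh : 0 < h) (x : ℝ) :
    HasDerivAt (hatF h) (hatN h x) x := by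
  have hne : h ≠ 0 := hh.ne'
  have base2 : ∀ z : ℝ, HasDerivAt (fun y : ℝ => y + y ^ 2 / (2 * h)) (1 + z / h) z := by
    intro z
    have := (hasDerivAt_id z).add ((hasDerivAt_pow 2 z).div_const (2 * h))
    refine this.congr_deriv ?_
    field_simp
    ring
  have base3 : ∀ z : ℝ, HasDerivAt (fun y : ℝ => y - y ^ 2 / (2 * h)) (1 - z / h) z := by
    intro z
    have := (hasDerivAt_id z).sub ((hasDerivAt_pow 2 z).div_const (2 * h))
    refine this.congr_deriv ?_
    field_simp
    ring
  have nlow : ∀ z : ℝ, z ≤ -h → hatN h z = 0 := by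
    intro z hz
    rw [hatN, abs_of_nonpos (by linarith)]
    exact max_eq_left (by rw [sub_nonpos, le_div_iff₀ hh]; linarith)
  have nmid1 : ∀ z : ℝ, -h ≤ z → z ≤ 0 → hatN h z = 1 + z / h := by
    intro z hz1 hz2
    rw [hatN, abs_of_nonpos hz2]
    rw [max_eq_right (by rw [sub_nonneg, div_le_one hh]; linarith)]
    ring
  have nmid2 : ∀ z : ℝ, 0 ≤ z → z ≤ h → hatN h z = 1 - z / h := by
    intro z hz1 hz2
    rw [hatN, abs_of_nonneg hz1]
    rw [max_eq_right (by rw [sub_nonneg, div_le_one hh]; linarith)]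
  have nhigh : ∀ z : ℝ, h ≤ z → hatN h z = 0 := by
    intro z hz
    rw [hatN, abs_of_nonneg (by linarith)]
    exact max_eq_left (by rw [sub_nonpos, le_div_iff₀ hh]; linarith)
  rcases lt_trichotomy x (-h) with H | H | H
  · rw [nlow x H.le]
    refine (hasDerivAt_const x (-h / 2)).congr_of_eventuallyEq ?_
    filter_upwards [Iio_mem_nhds H] with y hy
    rw [mem_Iio] at hy
    simp only [hatF, if_pos hy.le]
  · subst H
    rw [nlow (-h) le_rfl]
    refine glue ?_ ?_
    · refine left_piece (show -h - 1 < -h by linarith) (hasDerivAt_const _ (-h / 2)) ?_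
      intro y _ hy2
      simp only [hatF, if_pos hy2]
    · have hg := base2 (-h)
      have hval : 1 + -h / h = 0 := by field_simp; norm_num
      rw [hval] at hg
      refine right_piece (show -h < 0 from neg_neg_iff_pos.mpr hh) hg ?_
      intro y h1 h2
      rcases le_or_gt y (-h) with hy | hy
      · have : y = -h := le_antisymm hy h1
        subst this
        simp only [hatF, if_pos le_rfl]
        field_simp
        ring
      · simp only [hatF, if_neg (not_le.mpr hy), if_pos h2.le]
  · rcases lt_trichotomy x 0 with H0 | H0 | H0
    · rw [nmid1 x H.le H0.le]
      refine (base2 x).congr_of_eventuallyEq ?_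
      filter_upwards [Ioo_mem_nhds H H0] with y hy
      rw [mem_Ioo] at hy
      simp only [hatF, if_neg (not_le.mpr hy.1), if_pos hy.2.le]
    · subst H0
      have hval : hatN h 0 = 1 := by rw [nmid1 0 (by linarith) le_rfl]; simp
      rw [hval]
      refine glue ?_ ?_
      · have hg := base2 0
        rw [show (1 : ℝ) + 0 / h = 1 by simp] at hg
        refine left_piece H hg ?_
        intro y h1 h2
        simp only [hatF, if_neg (not_le.mpr h1), if_pos h2]
      · have hg := base3 0
        rw [show (1 : ℝ) - 0 / h = 1 by simp] at hg
        refine right_piece hh hg ?_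
        intro y h1 h2
        rcases le_or_gt y 0 with hy | hy
        · have : y = 0 := le_antisymm hy h1
          subst this
          simp only [hatF, if_neg (not_le.mpr (by linarith : -h < (0:ℝ))), if_pos le_rfl]
          norm_num
        · simp only [hatF, if_neg (not_le.mpr (by linarith : -h < y)),
            if_neg (not_le.mpr hy), if_pos h2.le]
    · rcases lt_trichotomy x h with H1 | H1 | H1
      · rw [nmid2 x H0.le H1.le]
        refine (base3 x).congr_of_eventuallyEq ?_
        filter_upwards [Ioo_mem_nhds H0 H1] with y hy
        rw [mem_Ioo] at hy
        simp only [hatF, if_neg (not_le.mpr (by linarith : -h < y)),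
          if_neg (not_le.mpr hy.1), if_pos hy.2.le]
      · subst x
        rw [nhigh h le_rfl]
        refine glue ?_ ?_
        · have hg := base3 h
          have hval : 1 - h / h = 0 := by field_simp; norm_num
          rw [hval] at hg
          refine left_piece hh hg ?_
          intro y h1 h2
          simp only [hatF, if_neg (not_le.mpr (by linarith : -h < y)),
            if_neg (not_le.mpr h1), if_pos h2]
        · refine right_piece (show h < h + 1 by linarith) (hasDerivAt_const _ (h / 2)) ?_
          intro y h1 _
          rcases le_or_gt y h with hy | hy
          · rw [le_antisymm hy h1]
            simp only [hatF, if_neg (not_le.mpr (by linarith : -h < h)),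
              if_neg (not_le.mpr hh), if_pos le_rfl]
            field_simp
            ring
          · simp only [hatF, if_neg (not_le.mpr (by linarith : -h < y)),
              if_neg (not_le.mpr (by linarith : (0:ℝ) < y)), if_neg (not_le.mpr hy)]
      · rw [nhigh x H1.le]
        refine (hasDerivAt_const x (h / 2)).congr_of_eventuallyEq ?_
        filter_upwards [Ioi_mem_nhds H1] with y hy
        rw [mem_Ioi] at hy
        simp only [hatF, if_neg (not_le.mpr (by linarith : -h < y)),
          if_neg (not_le.mpr (by linarith : (0:ℝ) < y)), if_neg (not_le.mpr hy)]

lemma hatF_contDiff {h : ℝ} (hh : 0 < h) : ContDiff ℝ 1 (hatF h) := by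
  rw [contDiff_one_iff_deriv]
  refine ⟨fun x => (hasDerivAt_hatF hh x).differentiableAt, ?_⟩
  have : deriv (hatF h) = hatN h := funext fun x => (hasDerivAt_hatF hh x).deriv
  rw [this]
  exact hatN_continuous h

lemma gimpS_eq (h lp : ℝ) (hh : 0 < h) (hlp : 0 < lp) (hle : lp ≤ h / 2) :
    gimpS h lp = fun ξ => (hatF h (ξ + lp) - hatF h (ξ - lp)) / (2 * lp) := by
  have hne : h ≠ 0 := hh.ne'
  have lne : lp ≠ 0 := hlp.ne'
  funext ξ
  simp only [gimpS, hatF]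
  rcases le_or_gt ξ (-h - lp) with H1 | H1
  · rw [if_neg (by rintro ⟨c1, -⟩; linarith), if_neg (by rintro ⟨c1, -⟩; linarith),
      if_neg (by rintro ⟨c1, -⟩; linarith), if_neg (by rintro ⟨c1, -⟩; linarith),
      if_neg (by rintro ⟨c1, -⟩; linarith),
      if_pos (by linarith : ξ + lp ≤ -h), if_pos (by linarith : ξ - lp ≤ -h)]
    simp
  rcases le_or_gt ξ (-h + lp) with H2 | H2
  · rw [if_pos ⟨H1, H2⟩, if_neg (not_le.mpr (by linarith) : ¬ξ + lp ≤ -h),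
      if_pos (by linarith : ξ + lp ≤ 0), if_pos (by linarith : ξ - lp ≤ -h)]
    field_simp
    ring
  rcases le_or_gt ξ (-lp) with H3 | H3
  · rw [if_neg (by rintro ⟨-, c2⟩; linarith), if_pos ⟨H2, H3⟩,
      if_neg (not_le.mpr (by linarith) : ¬ξ + lp ≤ -h), if_pos (by linarith : ξ + lp ≤ 0),
      if_neg (not_le.mpr (by linarith) : ¬ξ - lp ≤ -h), if_pos (by linarith : ξ - lp ≤ 0)]
    field_simp
    ring
  rcases le_or_gt ξ lp with H4 | H4
  · rw [if_neg (by rintro ⟨-, c2⟩; linarith), if_neg (by rintro ⟨-, c2⟩; linarith),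
      if_pos ⟨H3, H4⟩,
      if_neg (not_le.mpr (by linarith) : ¬ξ + lp ≤ -h),
      if_neg (not_le.mpr (by linarith) : ¬ξ + lp ≤ 0), if_pos (by linarith : ξ + lp ≤ h),
      if_neg (not_le.mpr (by linarith) : ¬ξ - lp ≤ -h), if_pos (by linarith : ξ - lp ≤ 0)]
    field_simp
    ring
  rcases le_or_gt ξ (h - lp) with H5 | H5
  · rw [if_neg (by rintro ⟨-, c2⟩; linarith), if_neg (by rintro ⟨-, c2⟩; linarith),
      if_neg (by rintro ⟨-, c2⟩; linarith), if_pos ⟨H4, H5⟩,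
      if_neg (not_le.mpr (by linarith) : ¬ξ + lp ≤ -h),
      if_neg (not_le.mpr (by linarith) : ¬ξ + lp ≤ 0), if_pos (by linarith : ξ + lp ≤ h),
      if_neg (not_le.mpr (by linarith) : ¬ξ - lp ≤ -h),
      if_neg (not_le.mpr (by linarith) : ¬ξ - lp ≤ 0), if_pos (by linarith : ξ - lp ≤ h)]
    field_simp
    ring
  rcases le_or_gt ξ (h + lp) with H6 | H6
  · rw [if_neg (by rintro ⟨-, c2⟩; linarith), if_neg (by rintro ⟨-, c2⟩; linarith),
      if_neg (by rintro ⟨-, c2⟩; linarith), if_neg (by rintro ⟨-, c2⟩; linarith),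
      if_pos ⟨H5, H6⟩,
      if_neg (not_le.mpr (by linarith) : ¬ξ + lp ≤ -h),
      if_neg (not_le.mpr (by linarith) : ¬ξ + lp ≤ 0),
      if_neg (not_le.mpr (by linarith) : ¬ξ + lp ≤ h),
      if_neg (not_le.mpr (by linarith) : ¬ξ - lp ≤ -h),
      if_neg (not_le.mpr (by linarith) : ¬ξ - lp ≤ 0), if_pos (by linarith : ξ - lp ≤ h)]
    field_simp
    ring
  · rw [if_neg (by rintro ⟨-, c2⟩; linarith), if_neg (by rintro ⟨-, c2⟩; linarith),
      if_neg (by rintro ⟨-, c2⟩; linarith), if_neg (by rintro ⟨-, c2⟩; linarith),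
      if_neg (by rintro ⟨-, c2⟩; linarith),
      if_neg (not_le.mpr (by linarith) : ¬ξ + lp ≤ -h),
      if_neg (not_le.mpr (by linarith) : ¬ξ + lp ≤ 0),
      if_neg (not_le.mpr (by linarith) : ¬ξ + lp ≤ h),
      if_neg (not_le.mpr (by linarith) : ¬ξ - lp ≤ -h),
      if_neg (not_le.mpr (by linarith) : ¬ξ - lp ≤ 0),
      if_neg (not_le.mpr (by linarith) : ¬ξ - lp ≤ h)]
    simp

/-- The GIMPM shape function is continuously differentiable on `ℝ`. -/
theorem gimpS_contDiff (h lp : ℝ) (hh : 0 < h) (hlp : 0 < lp) (hle : lp ≤ h / 2) :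
    ContDiff ℝ 1 (gimpS h lp) := by
  rw [gimpS_eq h lp hh hlp hle]
  have hF := hatF_contDiff hh
  exact ((hF.comp (contDiff_id.add contDiff_const)).sub
    (hF.comp (contDiff_id.sub contDiff_const))).div_const _
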